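/- The formal power series F(x,y) = x + y − log(1 − (e^x − 1)(e^y − 1)) in ℚ[[x,y]] satisfies the partial differential equation ∂_x ∂_y F = (∂_x F) · (∂_y F), is symmetric in x and y, and satisfies F(x,0) = x. -/

import Mathlib

/-- The series `e^x` in `ℚ[[x,y]]`. -/
noncomputable def expX : MvPowerSeries (Fin 2) ℚ :=
  fun d => if d 1 = 0 then ((d 0).factorial : ℚ)⁻¹ else 0

/-- The series `e^y` in `ℚ[[x,y]]`. -/
noncomputable def expY : MvPowerSeries (Fin 2) ℚ :=
  fun d => if d 0 = 0 then ((d 1).factorial : ℚ)⁻¹ else 0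

/-- `-log(1-u) = ∑_{n ≥ 1} uⁿ/n` for a series `u` with zero constant term; since
`uⁿ` then has no coefficient in total degree `< n`, the coefficient in degree `d` is
the (finite) sum over `1 ≤ n ≤ |d|`. -/
noncomputable def negLogOneSub (u : MvPowerSeries (Fin 2) ℚ) : MvPowerSeries (Fin 2) ℚ :=
  fun d => ∑ n ∈ Finset.range (d 0 + d 1 + 1), (n : ℚ)⁻¹ * ((u ^ n) d)

/-- Formal partial derivative in `x`. -/
noncomputable def dX (f : MvPowerSeries (Fin 2) ℚ) : MvPowerSeries (Fin 2) ℚ :=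
  fun d => ((d 0 : ℚ) + 1) * f (d + Finsupp.single 0 1)

/-- Formal partial derivative in `y`. -/
noncomputable def dY (f : MvPowerSeries (Fin 2) ℚ) : MvPowerSeries (Fin 2) ℚ :=
  fun d => ((d 1 : ℚ) + 1) * f (d + Finsupp.single 1 1)

/-- The series `F(x,y) = x + y - log(1 - (eˣ-1)(e^y-1))` in `ℚ[[x,y]]`. -/
noncomputable def F : MvPowerSeries (Fin 2) ℚ :=
  MvPowerSeries.X 0 + MvPowerSeries.X 1 + negLogOneSub ((expX - 1) * (expY - 1))

/-!
Put `u = (eˣ - 1)(eʸ - 1)`. Modulo terms of order `N`, `-log(1 - u)` is the partial sum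
`∑_{n ≤ N} uⁿ/n`, whose derivative multiplied by `1 - u` telescopes to `(1 - uᴺ) ∂ᵢu`; hence
`(1 - u) ∂ᵢ(-log(1 - u)) = ∂ᵢu`. As `1 - u = eˣ + eʸ - eˣeʸ`, this gives `(1 - u) ∂ₓF = eʸ` and
`(1 - u) ∂_yF = eˣ`. Differentiating the second identity in `x` and multiplying by `1 - u` shows
that `(1 - u)² ∂ₓ∂_yF` and `(1 - u)² ∂ₓF ∂_yF` both equal `eˣeʸ`, and `1 - u` is not a zero divisor.
Swapping the variables fixes `F`, and `F(x, 0) = x` because every `uⁿ` with `n ≥ 1` is a multiple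
of `eʸ - 1`.
-/

open MvPowerSeries Finsupp

namespace MvPowerSeries

variable {σ R : Type*}

theorem eq_zero_of_forall_nat_le_order [Semiring R] {f : MvPowerSeries σ R}
    (h : ∀ n : ℕ, (n : ℕ∞) ≤ f.order) : f = 0 := by
  ext d
  exact coeff_of_lt_order ((ENat.natCast_lt_natCast.mpr d.degree.lt_succ_self).trans_le (h _))

theorem nat_le_order_pderiv [CommSemiring R] {f : MvPowerSeries σ R} {n : ℕ} (i : σ)
    (h : ((n + 1 : ℕ) : ℕ∞) ≤ f.order) : (n : ℕ∞) ≤ (pderiv R i f).order := by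
  refine nat_le_order fun d hd => ?_
  rw [coeff_pderiv, coeff_of_lt_order, zero_mul]
  refine lt_of_lt_of_le ?_ h
  rw [map_add, degree_single]
  exact_mod_cast Nat.succ_lt_succ hd

theorem coeff_mul_eq_zero_of_coeff_right_eq_zero [CommSemiring R] (j : σ) (f : MvPowerSeries σ R)
    {g : MvPowerSeries σ R} (hg : ∀ d : σ →₀ ℕ, d j = 0 → coeff d g = 0)
    {d : σ →₀ ℕ} (hd : d j = 0) : coeff d (f * g) = 0 := by
  classical
  rw [coeff_mul]
  refine Finset.sum_eq_zero fun p hp => ?_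
  have hp : p.1 + p.2 = d := Finset.HasAntidiagonal.mem_antidiagonal.mp hp
  rw [hg p.2 (add_eq_zero.mp (by rwa [← Finsupp.add_apply, hp])).2, mul_zero]

theorem pderiv_sum_inv_smul_pow {K : Type*} [Field K] [CharZero K] (i : σ)
    (u : MvPowerSeries σ K) (N : ℕ) :
    pderiv K i (∑ n ∈ Finset.range (N + 1), (n : K)⁻¹ • u ^ n) =
      (∑ n ∈ Finset.range N, u ^ n) * pderiv K i u := by
  induction N with
  | zero => simp
  | succ N ih =>
    rw [Finset.sum_range_succ, map_add, ih, Finset.sum_range_succ, add_mul,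
      Derivation.map_smul, Derivation.leibniz_pow, Nat.add_sub_cancel, ← Nat.cast_smul_eq_nsmul K,
      inv_smul_smul₀ (Nat.cast_ne_zero.mpr N.succ_ne_zero), smul_eq_mul]

theorem coeff_rename_equiv {τ : Type*} [CommSemiring R] (e : σ ≃ τ) (p : MvPowerSeries σ R)
    (d : τ →₀ ℕ) : coeff d (rename e p) = coeff (d.equivMapDomain e.symm) p := by
  have hd : embDomain e.toEmbedding (d.equivMapDomain e.symm) = d := by
    ext a
    obtain ⟨b, rfl⟩ := e.surjective a
    rw [show e b = e.toEmbedding b from rfl, embDomain_apply_self]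
    simp
  conv_lhs => rw [← hd]
  exact coeff_embDomain_rename _ _ _

end MvPowerSeries

theorem dX_eq_pderiv (f : MvPowerSeries (Fin 2) ℚ) : dX f = pderiv ℚ 0 f := by
  ext d
  rw [coeff_pderiv, mul_comm]
  rfl

theorem dY_eq_pderiv (f : MvPowerSeries (Fin 2) ℚ) : dY f = pderiv ℚ 1 f := by
  ext d
  rw [coeff_pderiv, mul_comm]
  rfl

section NegLogOneSub

variable {u : MvPowerSeries (Fin 2) ℚ}

theorem coeff_negLogOneSub (d : Fin 2 →₀ ℕ) :
    coeff d (negLogOneSub u) = ∑ n ∈ Finset.range (d 0 + d 1 + 1), (n : ℚ)⁻¹ * coeff d (u ^ n) :=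
  rfl

theorem nat_le_order_negLogOneSub_sub (hu : constantCoeff u = 0) (N : ℕ) :
    (N : ℕ∞) ≤ (negLogOneSub u - ∑ n ∈ Finset.range N, (n : ℚ)⁻¹ • u ^ n).order := by
  refine nat_le_order fun d hd => ?_
  have hdeg : d.degree = d 0 + d 1 := by simp [degree_eq_sum, Fin.sum_univ_two]
  rw [map_sub, sub_eq_zero, map_sum, coeff_negLogOneSub]
  simp only [coeff_smul]
  refine Finset.sum_subset (Finset.range_subset_range.mpr (by omega)) fun n _ hn => ?_
  rw [coeff_of_lt_order ((?_ : (d.degree : ℕ∞) < n).trans_le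
    (le_order_pow_of_constantCoeff_eq_zero n hu)), mul_zero]
  simp only [Finset.mem_range, not_lt] at hn
  exact_mod_cast (by omega : d.degree < n)

theorem one_sub_mul_pderiv_negLogOneSub (hu : constantCoeff u = 0) (i : Fin 2) :
    (1 - u) * pderiv ℚ i (negLogOneSub u) = pderiv ℚ i u := by
  rw [← sub_eq_zero]
  refine eq_zero_of_forall_nat_le_order fun N => ?_
  set S := ∑ n ∈ Finset.range (N + 1), (n : ℚ)⁻¹ • u ^ n
  have hsplit : (1 - u) * pderiv ℚ i (negLogOneSub u) - pderiv ℚ i u =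
      (1 - u) * pderiv ℚ i (negLogOneSub u - S) + -(u ^ N * pderiv ℚ i u) := by
    rw [map_sub, pderiv_sum_inv_smul_pow, mul_sub, ← mul_assoc, mul_neg_geom_sum]
    ring
  have hS : ((N + 1 : ℕ) : ℕ∞) ≤ (negLogOneSub u - S).order :=
    nat_le_order_negLogOneSub_sub hu (N + 1)
  have htail : (N : ℕ∞) ≤ ((1 - u) * pderiv ℚ i (negLogOneSub u - S)).order :=
    (nat_le_order_pderiv i hS).trans (le_add_self.trans le_order_mul)
  have hpow : (N : ℕ∞) ≤ (-(u ^ N * pderiv ℚ i u)).order := by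
    rw [order_neg]
    exact (le_order_pow_of_constantCoeff_eq_zero N hu).trans (le_self_add.trans le_order_mul)
  rw [hsplit]
  exact (le_min htail hpow).trans min_order_le_add

theorem coeff_negLogOneSub_eq_zero (j : Fin 2) (hu : ∀ d : Fin 2 →₀ ℕ, d j = 0 → coeff d u = 0)
    {d : Fin 2 →₀ ℕ} (hd : d j = 0) : coeff d (negLogOneSub u) = 0 := by
  rw [coeff_negLogOneSub]
  refine Finset.sum_eq_zero fun n _ => ?_
  cases n with
  | zero => simp
  | succ n => rw [pow_succ, coeff_mul_eq_zero_of_coeff_right_eq_zero j _ hu hd, mul_zero]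

theorem rename_swap_negLogOneSub (u : MvPowerSeries (Fin 2) ℚ) :
    rename (Equiv.swap (0 : Fin 2) 1) (negLogOneSub u) =
      negLogOneSub (rename (Equiv.swap (0 : Fin 2) 1) u) := by
  ext d
  simp [coeff_rename_equiv, coeff_negLogOneSub, ← map_pow, add_comm (d 0)]

end NegLogOneSub

section Exp

theorem coeff_expX (d : Fin 2 →₀ ℕ) :
    coeff d expX = if d 1 = 0 then ((d 0).factorial : ℚ)⁻¹ else 0 :=
  rfl

theorem coeff_expY (d : Fin 2 →₀ ℕ) :
    coeff d expY = if d 0 = 0 then ((d 1).factorial : ℚ)⁻¹ else 0 :=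
  rfl

theorem inv_factorial_succ_mul_succ {K : Type*} [Field K] [CharZero K] (n : ℕ) :
    ((n + 1).factorial : K)⁻¹ * (n + 1) = (n.factorial : K)⁻¹ := by
  rw [Nat.factorial_succ]
  push_cast
  field_simp

theorem pderiv_zero_expX : pderiv ℚ 0 expX = expX := by
  ext d
  rw [coeff_pderiv, coeff_expX, coeff_expX]
  split_ifs <;> simp_all [inv_factorial_succ_mul_succ]

theorem pderiv_one_expX : pderiv ℚ 1 expX = 0 := by
  ext d
  simp [coeff_pderiv, coeff_expX]

theorem pderiv_zero_expY : pderiv ℚ 0 expY = 0 := by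
  ext d
  simp [coeff_pderiv, coeff_expY]

theorem pderiv_one_expY : pderiv ℚ 1 expY = expY := by
  ext d
  rw [coeff_pderiv, coeff_expY, coeff_expY]
  split_ifs <;> simp_all [inv_factorial_succ_mul_succ]

theorem constantCoeff_expX : constantCoeff expX = 1 := by
  simp [← coeff_zero_eq_constantCoeff_apply, coeff_expX]

theorem constantCoeff_expY : constantCoeff expY = 1 := by
  simp [← coeff_zero_eq_constantCoeff_apply, coeff_expY]

theorem coeff_expY_sub_one_eq_zero {d : Fin 2 →₀ ℕ} (hd : d 1 = 0) : coeff d (expY - 1) = 0 := by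
  rw [map_sub, coeff_expY, coeff_one]
  by_cases h : d 0 = 0
  · have : d = 0 := by ext a; fin_cases a <;> assumption
    simp [this]
  · simp [h, show d ≠ 0 from fun h' => h (by simp [h'])]

theorem rename_swap_expX : rename (Equiv.swap (0 : Fin 2) 1) expX = expY := by
  ext d
  simp [coeff_rename_equiv, coeff_expX, coeff_expY]

theorem rename_swap_expY : rename (Equiv.swap (0 : Fin 2) 1) expY = expX := by
  ext d
  simp [coeff_rename_equiv, coeff_expX, coeff_expY]

end Exp

section F

theorem F_def : F = X 0 + X 1 + negLogOneSub ((expX - 1) * (expY - 1)) := rfl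

theorem constantCoeff_expX_sub_one_mul_expY_sub_one :
    constantCoeff ((expX - 1) * (expY - 1)) = 0 := by
  simp [constantCoeff_expX, constantCoeff_expY]

theorem one_sub_mul_pderiv_zero_F : (1 - (expX - 1) * (expY - 1)) * pderiv ℚ 0 F = expY := by
  have hL := one_sub_mul_pderiv_negLogOneSub constantCoeff_expX_sub_one_mul_expY_sub_one 0
  simp only [Derivation.leibniz, map_sub, pderiv_one, pderiv_zero_expX, pderiv_zero_expY,
    smul_eq_mul] at hL
  rw [F_def, map_add, map_add, pderiv_X_self, pderiv_X_of_ne one_ne_zero]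
  linear_combination hL

theorem one_sub_mul_pderiv_one_F : (1 - (expX - 1) * (expY - 1)) * pderiv ℚ 1 F = expX := by
  have hL := one_sub_mul_pderiv_negLogOneSub constantCoeff_expX_sub_one_mul_expY_sub_one 1
  simp only [Derivation.leibniz, map_sub, pderiv_one, pderiv_one_expX, pderiv_one_expY,
    smul_eq_mul] at hL
  rw [F_def, map_add, map_add, pderiv_X_self, pderiv_X_of_ne zero_ne_one]
  linear_combination hL

theorem pderiv_zero_pderiv_one_F :
    pderiv ℚ 0 (pderiv ℚ 1 F) = pderiv ℚ 0 F * pderiv ℚ 1 F := by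
  have hx := one_sub_mul_pderiv_zero_F
  have hy := one_sub_mul_pderiv_one_F
  have hxy := congrArg (pderiv ℚ 0) hy
  simp only [Derivation.leibniz, map_sub, pderiv_one, pderiv_zero_expX, pderiv_zero_expY,
    smul_eq_mul] at hxy
  have hne : (1 - (expX - 1) * (expY - 1)) ^ 2 ≠ 0 := by
    refine pow_ne_zero 2 fun h => ?_
    simpa [constantCoeff_expX_sub_one_mul_expY_sub_one] using congrArg constantCoeff h
  refine mul_left_cancel₀ hne ?_
  linear_combination (1 - (expX - 1) * (expY - 1)) * hxy + ((expY - 1) * expX - expY) * hy -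
    (1 - (expX - 1) * (expY - 1)) * pderiv ℚ 1 F * hx

theorem rename_swap_F : rename (Equiv.swap (0 : Fin 2) 1) F = F := by
  rw [F_def, map_add, map_add, rename_X, rename_X, Equiv.swap_apply_left, Equiv.swap_apply_right,
    rename_swap_negLogOneSub, map_mul, map_sub, map_sub, map_one, rename_swap_expX,
    rename_swap_expY, add_comm (X 1), mul_comm]

theorem coeff_F_symm (i j : ℕ) :
    coeff (single 0 i + single 1 j) F = coeff (single 0 j + single 1 i) F := by
  have hswap : (single (0 : Fin 2) i + single 1 j).equivMapDomain (Equiv.swap (0 : Fin 2) 1).symm =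
      single 0 j + single 1 i := by
    ext a
    fin_cases a <;> simp
  conv_lhs => rw [← rename_swap_F, coeff_rename_equiv, hswap]

theorem coeff_F_of_eq_zero {d : Fin 2 →₀ ℕ} (hd : d 1 = 0) : coeff d F = coeff d (X 0) := by
  have hu : ∀ e : Fin 2 →₀ ℕ, e 1 = 0 → coeff e ((expX - 1) * (expY - 1)) = 0 := fun _ =>
    coeff_mul_eq_zero_of_coeff_right_eq_zero 1 _ fun _ => coeff_expY_sub_one_eq_zero
  rw [F_def, map_add, map_add, coeff_negLogOneSub_eq_zero 1 hu hd, coeff_X d 1,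
    if_neg (fun h => by simp [h] at hd), add_zero, add_zero]

end F

/-- `F = x + y - log(1 - (eˣ-1)(e^y-1))` satisfies
`∂ₓ∂_y F = (∂ₓF)·(∂_yF)`, is symmetric in `x` and `y` (its coefficient on `x^i y^j`
equals its coefficient on `x^j y^i`), and `F(x,0) = x` (its coefficients in the
monomials with `y`-exponent `0` agree with those of the series `x`). -/
theorem stmt4 :
    dX (dY F) = dX F * dY F ∧
    (∀ i j : ℕ, F (Finsupp.single 0 i + Finsupp.single 1 j) =
      F (Finsupp.single 0 j + Finsupp.single 1 i)) ∧
    (∀ d : Fin 2 →₀ ℕ, d 1 = 0 → F d = (MvPowerSeries.X 0 : MvPowerSeries (Fin 2) ℚ) d) := by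
  simp only [dX_eq_pderiv, dY_eq_pderiv]
  exact ⟨pderiv_zero_pderiv_one_F, coeff_F_symm, fun _ => coeff_F_of_eq_zero⟩
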